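/- arXiv:1002.0783 — 2 statements merged into one kernel-verified Lean document; each statement's English description precedes it below -/
import Mathlib

section
/- Let G be a finite loopless multigraph, let H be a maximum Δ(G)-edge-colorable subgraph of G, properly edge-colored with colors 1,…,Δ(G), and let e = (u,v) be an uncolored edge (an edge of G not in H). Then for every color α missing at u and every color β missing at v, one has α ∈ C(v) and β ∈ C(u), and the α-β-alternating path starting at v ends at the vertex u; in particular this path together with the edge e forms an odd cycle (denoted C^e_{α,β}). -/
/-- A finite undirected multigraph without loops: `inc e` is the (unordered)
pair of endpoints of the edge `e`. -/
structure Multigraph (V : Type) (E : Type) where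
  inc : E → Sym2 V
  loopless : ∀ e : E, ¬ (inc e).IsDiag

namespace Multigraph

variable {V E : Type}

/-- The degree of the vertex `v` in the subgraph with edge set `S`. -/
noncomputable def degOn (G : Multigraph V E) (S : Set E) (v : V) : ℕ :=
  {e | e ∈ S ∧ v ∈ G.inc e}.ncard

/-- The degree of the vertex `v` in `G`. -/
noncomputable def deg (G : Multigraph V E) (v : V) : ℕ :=
  G.degOn Set.univ v

/-- The maximum degree `Δ(G)` of `G`. -/
noncomputable def maxDeg (G : Multigraph V E) [Fintype V] : ℕ :=
  Finset.univ.sup G.deg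

/-- The maximum degree of the subgraph of `G` with edge set `S`. -/
noncomputable def maxDegOn (G : Multigraph V E) [Fintype V] (S : Set E) : ℕ :=
  Finset.univ.sup (G.degOn S)

/-- The minimum degree of the subgraph of `G` with edge set `S`. -/
noncomputable def minDegOn (G : Multigraph V E) [Fintype V] [Nonempty V] (S : Set E) : ℕ :=
  Finset.univ.inf' Finset.univ_nonempty (G.degOn S)

/-- `c` is a proper edge coloring of the subgraph of `G` with edge set `S`,
using the `n` colors `0, …, n-1`: distinct edges of `S` sharing a vertex get
distinct colors. -/
def ProperOn (G : Multigraph V E) (S : Set E) (c : E → ℕ) (n : ℕ) : Prop :=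
  (∀ e ∈ S, c e < n) ∧
    ∀ e ∈ S, ∀ f ∈ S, e ≠ f → (∃ v : V, v ∈ G.inc e ∧ v ∈ G.inc f) → c e ≠ c f

/-- The subgraph with edge set `S` is properly `n`-edge-colorable. -/
def ColorableOn (G : Multigraph V E) (S : Set E) (n : ℕ) : Prop :=
  ∃ c : E → ℕ, G.ProperOn S c n

/-- The chromatic index of the subgraph of `G` with edge set `S`. -/
noncomputable def chromIndexOn (G : Multigraph V E) (S : Set E) : ℕ :=
  sInf {n | G.ColorableOn S n}

/-- The chromatic index `χ'(G)`. -/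
noncomputable def chromIndex (G : Multigraph V E) : ℕ :=
  G.chromIndexOn Set.univ

/-- `S` is (the edge set of) a maximum `Δ(G)`-edge-colorable subgraph of `G`:
it is `Δ(G)`-edge-colorable and has as many edges as possible. -/
def IsMaxColorable (G : Multigraph V E) [Fintype V] (S : Set E) : Prop :=
  G.ColorableOn S G.maxDeg ∧
    ∀ T : Set E, G.ColorableOn T G.maxDeg → T.ncard ≤ S.ncard

/-- The color `α` is missing at the vertex `v` (w.r.t. the coloring `c` of the
subgraph with edge set `S`): no colored edge incident with `v` has color `α`. -/
def MissingAt (G : Multigraph V E) (S : Set E) (c : E → ℕ) (α : ℕ) (v : V) : Prop :=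
  ∀ e ∈ S, v ∈ G.inc e → c e ≠ α

/-- The maximum multiplicity `μ(G)` of an edge of `G`. -/
noncomputable def maxMult (G : Multigraph V E) [Fintype V] : ℕ :=
  Finset.univ.sup fun p : V × V => {e | G.inc e = s(p.1, p.2)}.ncard

/-- The underlying simple graph of `G`. -/
def toSimple (G : Multigraph V E) : SimpleGraph V where
  Adj u v := u ≠ v ∧ ∃ e : E, G.inc e = s(u, v)
  symm := by
    constructor
    intro u v h
    exact ⟨Ne.symm h.1, by obtain ⟨e, he⟩ := h.2; exact ⟨e, by rw [he, Sym2.eq_swap]⟩⟩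
  loopless := by constructor; intro v h; exact h.1 rfl

/-- Walks in a multigraph. -/
inductive Walk (G : Multigraph V E) : V → V → Type
  | nil (v : V) : Walk G v v
  | cons {u v w : V} (e : E) (h : G.inc e = s(u, v)) (p : Walk G v w) : Walk G u w

namespace Walk

/-- The list of edges of a walk. -/
def edges {G : Multigraph V E} : {u v : V} → G.Walk u v → List E
  | _, _, .nil _ => []
  | _, _, .cons e _ p => e :: edges p

/-- The list of vertices visited by a walk. -/
def support {G : Multigraph V E} : {u v : V} → G.Walk u v → List V
  | _, v, .nil _ => [v]
  | u, _, .cons _ _ p => u :: support p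

/-- A walk is a path if it visits no vertex twice. -/
def IsPath {G : Multigraph V E} {u v : V} (p : G.Walk u v) : Prop :=
  p.support.Nodup

/-- A closed walk is a cycle if it is nonempty, repeats no edge, and visits no
vertex twice (except for the common start/end). -/
def IsCycle {G : Multigraph V E} {v : V} (p : G.Walk v v) : Prop :=
  p.edges ≠ [] ∧ p.edges.Nodup ∧ p.support.tail.Nodup

end Walk

/-- The list of edges `l` is alternately colored `α, β, α, β, …` by `c`. -/
def AltColors (c : E → ℕ) (α β : ℕ) (l : List E) : Prop :=
  ∀ i : Fin l.length, c (l.get i) = if (i : ℕ) % 2 = 0 then α else β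

/-- The `α`-`β`-alternating walk `p` (w.r.t. the coloring `c` of the subgraph
with edge set `S`) is maximal: it cannot be extended at its endpoint. -/
def MaximalAlt (G : Multigraph V E) (S : Set E) (c : E → ℕ) (α β : ℕ)
    {v w : V} (p : G.Walk v w) : Prop :=
  ∀ f ∈ S, f ∉ p.edges → w ∈ G.inc f →
    c f ≠ (if p.edges.length % 2 = 0 then α else β)

/-- `C` is the edge set of the odd cycle `C^e_{α,β}`: the uncolored edge
`e = (u,v)` (with `α` missing at `u` and `β` missing at `v`) together with the
`α`-`β`-alternating path joining `v` to `u` inside the colored subgraph `S`. -/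
def IsKempeCycle (G : Multigraph V E) [Fintype V] (S : Set E) (c : E → ℕ)
    (e : E) (α β : ℕ) (C : Set E) : Prop :=
  α < G.maxDeg ∧ β < G.maxDeg ∧
    ∃ (u v : V) (p : G.Walk v u),
      G.inc e = s(u, v) ∧ G.MissingAt S c α u ∧ G.MissingAt S c β v ∧
      p.IsPath ∧ (∀ f ∈ p.edges, f ∈ S) ∧ AltColors c α β p.edges ∧
      C = insert e {f | f ∈ p.edges}

end Multigraph
namespace Multigraph

variable {V E : Type}

namespace Walk

variable {G : Multigraph V E}

@[simp] lemma edges_nil (v : V) : (Walk.nil (G := G) v).edges = [] := rfl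

@[simp] lemma edges_cons {u v w : V} (e : E) (h : G.inc e = s(u, v)) (p : G.Walk v w) :
    (Walk.cons e h p).edges = e :: p.edges := rfl

@[simp] lemma support_nil (v : V) : (Walk.nil (G := G) v).support = [v] := rfl

@[simp] lemma support_cons {u v w : V} (e : E) (h : G.inc e = s(u, v)) (p : G.Walk v w) :
    (Walk.cons e h p).support = u :: p.support := rfl

lemma support_ne_nil : ∀ {u v : V} (p : G.Walk u v), p.support ≠ []
  | _, _, .nil _ => by simp
  | _, _, .cons e h p => by simp

lemma length_support : ∀ {u v : V} (p : G.Walk u v),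
    p.support.length = p.edges.length + 1
  | _, _, .nil _ => rfl
  | _, _, .cons e h p => by simp [length_support p]

lemma support_get_zero : ∀ {u v : V} (p : G.Walk u v) (h : 0 < p.support.length),
    p.support.get ⟨0, h⟩ = u
  | _, _, .nil _, _ => rfl
  | _, _, .cons e h p, _ => rfl

lemma support_get_last : ∀ {u v : V} (p : G.Walk u v) (h : p.edges.length < p.support.length),
    p.support.get ⟨p.edges.length, h⟩ = v
  | _, _, .nil _, _ => rfl
  | _, _, .cons e h p, hh => by
      have := support_get_last p (by rw [length_support]; omega)
      simpa using this

lemma inc_get : ∀ {u v : V} (p : G.Walk u v) (i : ℕ) (hi : i < p.edges.length)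
    (h1 : i < p.support.length) (h2 : i + 1 < p.support.length),
    G.inc (p.edges.get ⟨i, hi⟩) = s(p.support.get ⟨i, h1⟩, p.support.get ⟨i + 1, h2⟩)
  | _, _, .nil _, i, hi, _, _ => by simp at hi
  | _, _, .cons e h p, 0, hi, h1, h2 => by
      have h0 : 0 < p.support.length := by rw [Walk.length_support]; omega
      have := support_get_zero p h0
      simp only [edges_cons, support_cons, List.get]
      rw [support_get_zero p]; exact h
  | _, _, .cons e h p, i + 1, hi, h1, h2 => by
      have := inc_get p i (by simpa using hi) ?_ ?_
      · simpa using this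
      · rw [length_support]; simp at hi; omega
      · rw [length_support]; simp at hi; omega

/-- Appending walks. -/
def append : ∀ {u v w : V}, G.Walk u v → G.Walk v w → G.Walk u w
  | _, _, _, .nil _, q => q
  | _, _, _, .cons e h p, q => .cons e h (append p q)

lemma edges_append : ∀ {u v w : V} (p : G.Walk u v) (q : G.Walk v w),
    (p.append q).edges = p.edges ++ q.edges
  | _, _, _, .nil _, q => rfl
  | _, _, _, .cons e h p, q => by simp [append, edges_append p q]

lemma support_append : ∀ {u v w : V} (p : G.Walk u v) (q : G.Walk v w),
    (p.append q).support = p.support.dropLast ++ q.support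
  | _, _, _, .nil _, q => rfl
  | _, _, _, .cons e h p, q => by
      simp only [append, support_cons, support_append p q,
        List.dropLast_cons_of_ne_nil (support_ne_nil p)]
      rfl

lemma eq_nil_of_edges_eq_nil : ∀ {u v : V} (p : G.Walk u v), p.edges = [] → u = v
  | _, _, .nil _, _ => rfl
  | _, _, .cons e h p, hp => by simp at hp

end Walk

end Multigraph

namespace Multigraph

variable {V E : Type} [Fintype V]

lemma list_get_congr {X : Type*} (l : List X) {i j : ℕ} (hij : i = j)
    (hi : i < l.length) (hj : j < l.length) : l.get ⟨i, hi⟩ = l.get ⟨j, hj⟩ := by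
  cases hij; rfl

lemma nodup_edges_of_isPath {G : Multigraph V E} {u v : V} (p : G.Walk u v)
    (hp : p.IsPath) : p.edges.Nodup := by
  rw [List.nodup_iff_injective_get]
  intro ⟨i, hi⟩ ⟨j, hj⟩ hij
  have hsupl := p.length_support
  have hinj : ∀ (a b : ℕ) (ha : a < p.support.length) (hb : b < p.support.length),
      p.support.get ⟨a, ha⟩ = p.support.get ⟨b, hb⟩ → a = b := by
    intro a b ha hb h
    have := (List.Nodup.get_inj_iff hp).mp h
    exact congrArg Fin.val this
  have h1 := p.inc_get i hi (by omega) (by omega)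
  have h2 := p.inc_get j hj (by omega) (by omega)
  rw [hij, h2] at h1
  rw [Sym2.eq_iff] at h1
  have : i = j := by
    rcases h1 with ⟨ha, hb⟩ | ⟨ha, hb⟩
    · exact hinj _ _ _ _ ha.symm
    · have := hinj _ _ _ _ ha.symm
      have := hinj _ _ _ _ hb.symm
      omega
  exact Fin.ext this

lemma mem_support_of_mem_edges {G : Multigraph V E} {u v : V} (p : G.Walk u v)
    {f : E} (hf : f ∈ p.edges) {x : V} (hx : x ∈ G.inc f) : x ∈ p.support := by
  obtain ⟨⟨i, hi⟩, hget⟩ := List.mem_iff_get.mp hf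
  have h1 := p.inc_get i hi (by rw [p.length_support]; omega) (by rw [p.length_support]; omega)
  rw [← hget, h1, Sym2.mem_iff] at hx
  rcases hx with rfl | rfl <;> exact List.get_mem _ _

/-- If `f ∈ S` is not on the alternating path `p` but is colored `α` or `β` and
touches `p` at `x`, then `x` is the endpoint of `p` and `c f` is the
"next" color of the path. -/
lemma alt_aux {G : Multigraph V E} {S : Set E} {c : E → ℕ} {α β : ℕ} {v : V}
    (hc : G.ProperOn S c G.maxDeg) (hαβ : α ≠ β)
    (hβv : G.MissingAt S c β v) {w : V} (p : G.Walk v w)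
    (hp : p.IsPath) (hpS : ∀ f ∈ p.edges, f ∈ S) (halt : AltColors c α β p.edges)
    {f : E} (hfS : f ∈ S) (hfp : f ∉ p.edges) (hcf : c f = α ∨ c f = β)
    {x : V} (hxf : x ∈ G.inc f) (hx : x ∈ p.support) :
    x = w ∧ c f = (if p.edges.length % 2 = 0 then α else β) := by
  obtain ⟨⟨j, hj⟩, hget⟩ := List.mem_iff_get.mp hx
  have hsupl := p.length_support
  have hjm : j < p.edges.length + 1 := by omega
  have hcol : ∀ (i : ℕ) (hi : i < p.edges.length),
      c (p.edges.get ⟨i, hi⟩) = if i % 2 = 0 then α else β := fun i hi => halt ⟨i, hi⟩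
  -- x is incident with path edge i whenever j = i or j = i+1
  have hxinc : ∀ (i : ℕ) (hi : i < p.edges.length), (j = i ∨ j = i + 1) →
      x ∈ G.inc (p.edges.get ⟨i, hi⟩) := by
    intro i hi hji
    rw [p.inc_get i hi (by omega) (by omega), Sym2.mem_iff]
    rcases hji with rfl | rfl
    · left; rw [← hget]
    · right; rw [← hget]
  have hprop : ∀ (i : ℕ) (hi : i < p.edges.length), (j = i ∨ j = i + 1) →
      c f ≠ c (p.edges.get ⟨i, hi⟩) := by
    intro i hi hji
    have hmem : p.edges.get ⟨i, hi⟩ ∈ p.edges := List.get_mem _ _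
    have hne : f ≠ p.edges.get ⟨i, hi⟩ := fun h => hfp (h ▸ hmem)
    exact hc.2 f hfS _ (hpS _ hmem) hne ⟨x, hxf, hxinc i hi hji⟩
  rcases Nat.lt_or_ge j p.edges.length with hjlt | hjge
  · exfalso
    have h1 := hprop j hjlt (Or.inl rfl)
    rw [hcol j hjlt] at h1
    rcases Nat.eq_zero_or_pos j with rfl | hj1
    · -- x = v, c f must be β, contradicting missing β at v
      have hxv : x = v := by rw [← hget, p.support_get_zero]
      have hcfβ : c f = β := by
        rcases hcf with h | h
        · simp at h1; exact absurd h h1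
        · exact h
      exact hβv f hfS (hxv ▸ hxf) hcfβ
    · have hj1m : j - 1 < p.edges.length := by omega
      have h2 := hprop (j-1) hj1m (Or.inr (by omega))
      rw [hcol (j-1) hj1m] at h2
      rcases Nat.even_or_odd j with he | ho
      · have e1 : j % 2 = 0 := Nat.even_iff.mp he
        have e2 : (j-1) % 2 = 1 := by omega
        rw [if_pos e1] at h1
        rw [if_neg (by omega)] at h2
        rcases hcf with h | h <;> [exact h1 h; exact h2 h]
      · have e1 : j % 2 = 1 := Nat.odd_iff.mp ho
        rw [if_neg (by omega)] at h1
        rw [if_pos (by omega)] at h2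
        rcases hcf with h | h <;> [exact h2 h; exact h1 h]
  · -- j = length, x = w
    have hjeq : j = p.edges.length := by omega
    have hxw : x = w :=
      hget.symm.trans ((list_get_congr p.support hjeq hj
        (by omega)).trans (p.support_get_last (by omega)))
    refine ⟨hxw, ?_⟩
    rcases Nat.eq_zero_or_pos p.edges.length with hm0 | hm1
    · have hxv : x = v :=
        hget.symm.trans ((list_get_congr p.support (show j = 0 by omega) hj
          (by omega)).trans (p.support_get_zero (by omega)))
      rcases hcf with h | h
      · rw [if_pos (by omega)]; exact h
      · exact absurd h (hβv f hfS (hxv ▸ hxf))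
    · have hj1m : p.edges.length - 1 < p.edges.length := by omega
      have h2 := hprop (p.edges.length - 1) hj1m (Or.inr (by omega))
      rw [hcol _ hj1m] at h2
      rcases Nat.even_or_odd p.edges.length with he | ho
      · have e1 : p.edges.length % 2 = 0 := Nat.even_iff.mp he
        rw [if_neg (by omega)] at h2
        rw [if_pos e1]
        rcases hcf with h | h
        · exact h
        · exact absurd h h2
      · have e1 : p.edges.length % 2 = 1 := Nat.odd_iff.mp ho
        rw [if_pos (by omega)] at h2
        rw [if_neg (by omega)]
        rcases hcf with h | h
        · exact absurd h h2
        · exact h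

end Multigraph

namespace Multigraph

variable {V E : Type} [Fintype V] [Fintype E]

lemma no_common_missing {G : Multigraph V E} {S : Set E}
    (hS : G.IsMaxColorable S) {c : E → ℕ} (hc : G.ProperOn S c G.maxDeg)
    {e : E} (he : e ∉ S) {u v : V} (huv : G.inc e = s(u, v))
    {γ : ℕ} (hγ : γ < G.maxDeg)
    (hu : G.MissingAt S c γ u) (hv : G.MissingAt S c γ v) : False := by
  classical
  set c' : E → ℕ := fun f => if f = e then γ else c f with hc'
  have hT : G.ColorableOn (insert e S) G.maxDeg := by
    refine ⟨c', ?_, ?_⟩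
    · intro f hf
      rcases Set.mem_insert_iff.mp hf with rfl | hfS
      · simpa [hc'] using hγ
      · have hfe : f ≠ e := fun h => he (h ▸ hfS)
        simpa [hc', hfe] using hc.1 f hfS
    · intro f hf g hg hfg hshare
      by_cases hfe : f = e
      · by_cases hge : g = e
        · exact absurd (hfe.trans hge.symm) hfg
        · have hgS : g ∈ S := (Set.mem_insert_iff.mp hg).resolve_left hge
          obtain ⟨x, hxf, hxg⟩ := hshare
          rw [hfe, huv, Sym2.mem_iff] at hxf
          simp only [hc', if_pos hfe, if_neg hge]
          rcases hxf with rfl | rfl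
          · exact fun h => hu g hgS hxg h.symm
          · exact fun h => hv g hgS hxg h.symm
      · by_cases hge : g = e
        · have hfS : f ∈ S := (Set.mem_insert_iff.mp hf).resolve_left hfe
          obtain ⟨x, hxf, hxg⟩ := hshare
          rw [hge, huv, Sym2.mem_iff] at hxg
          simp only [hc', if_neg hfe, if_pos hge]
          rcases hxg with rfl | rfl
          · exact fun h => hu f hfS hxf h
          · exact fun h => hv f hfS hxf h
        · have hfS : f ∈ S := (Set.mem_insert_iff.mp hf).resolve_left hfe
          have hgS : g ∈ S := (Set.mem_insert_iff.mp hg).resolve_left hge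
          simpa [hc', hfe, hge] using hc.2 f hfS g hgS hfg hshare
  have h1 := hS.2 _ hT
  rw [Set.ncard_insert_of_notMem he S.toFinite] at h1
  omega

lemma start_mem_support {G : Multigraph V E} {u v : V} (p : G.Walk u v) :
    u ∈ p.support := by
  cases p <;> simp

end Multigraph

namespace Multigraph

variable {V E : Type} [Fintype V] [Fintype E]

lemma maximal_ends {G : Multigraph V E} {S : Set E}
    (hS : G.IsMaxColorable S) {c : E → ℕ} (hc : G.ProperOn S c G.maxDeg)
    {e : E} (he : e ∉ S) {u v : V} (huv : G.inc e = s(u, v))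
    {α β : ℕ} (hα : α < G.maxDeg) (hβ : β < G.maxDeg)
    (hαu : G.MissingAt S c α u) (hβv : G.MissingAt S c β v)
    {w : V} (p : G.Walk v w) (hp : p.IsPath) (hpS : ∀ f ∈ p.edges, f ∈ S)
    (halt : AltColors c α β p.edges) (hmax : G.MaximalAlt S c α β p) :
    w = u ∧ Even p.edges.length ∧ p.edges ≠ [] := by
  classical
  have huvne : u ≠ v := by
    have := G.loopless e
    rw [huv, Sym2.mk_isDiag_iff] at this
    exact this
  have hαβ : α ≠ β := fun h =>
    no_common_missing hS hc he huv hα hαu (h ▸ hβv)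
  have hAv : ∃ f ∈ S, v ∈ G.inc f ∧ c f = α := by
    by_contra h
    push_neg at h
    exact no_common_missing hS hc he huv hα hαu (fun f hf hvf => h f hf hvf)
  have hne : p.edges ≠ [] := by
    intro h0
    have hvw := Walk.eq_nil_of_edges_eq_nil p h0
    obtain ⟨f, hfS, hvf, hcf⟩ := hAv
    have := hmax f hfS (by simp [h0]) (hvw ▸ hvf)
    rw [h0] at this
    simp at this
    exact this hcf
  have hm1 : 1 ≤ p.edges.length := List.length_pos_iff.mpr hne
  have hsupl := p.length_support
  have hinj : ∀ (a b : ℕ) (ha : a < p.support.length) (hb : b < p.support.length),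
      p.support.get ⟨a, ha⟩ = p.support.get ⟨b, hb⟩ → a = b :=
    fun a b ha hb h => congrArg Fin.val ((List.Nodup.get_inj_iff hp).mp h)
  have hcol : ∀ (i : ℕ) (hi : i < p.edges.length),
      c (p.edges.get ⟨i, hi⟩) = if i % 2 = 0 then α else β := fun i hi => halt ⟨i, hi⟩
  have hw : w = u := by
    by_contra hwu
    -- u is not on the path
    have hu_not : u ∉ p.support := by
      intro hmem
      obtain ⟨⟨j, hj⟩, hget⟩ := List.mem_iff_get.mp hmem
      have hjm : j < p.edges.length + 1 := by omega
      rcases Nat.eq_zero_or_pos j with hj0 | hj1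
      · exact huvne (hget.symm.trans ((list_get_congr p.support hj0 hj (by omega)).trans
          (p.support_get_zero (by omega))))
      · have hj1m : j - 1 < p.edges.length := by omega
        have hmemg : p.edges.get ⟨j-1, hj1m⟩ ∈ p.edges := List.get_mem _ _
        have hug : u ∈ G.inc (p.edges.get ⟨j-1, hj1m⟩) := by
          rw [p.inc_get (j-1) hj1m (by omega) (by omega), Sym2.mem_iff]
          right
          exact hget.symm.trans (list_get_congr p.support (by omega) hj (by omega))
        have hcol' := hcol (j-1) hj1m
        have hne_a := hαu _ (hpS _ hmemg) hug
        have hj_even : j % 2 = 0 := by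
          by_contra h
          rw [if_pos (by omega)] at hcol'
          exact hne_a hcol'
        rcases Nat.lt_or_ge j p.edges.length with hjlt | hjge
        · have hmemg2 : p.edges.get ⟨j, hjlt⟩ ∈ p.edges := List.get_mem _ _
          have hug2 : u ∈ G.inc (p.edges.get ⟨j, hjlt⟩) := by
            rw [p.inc_get j hjlt (by omega) (by omega), Sym2.mem_iff]
            left
            exact hget.symm
          have := hcol j hjlt
          rw [if_pos hj_even] at this
          exact hαu _ (hpS _ hmemg2) hug2 this
        · have hjeq : j = p.edges.length := by omega
          exact hwu (hget.symm.trans ((list_get_congr p.support hjeq hj (by omega)).trans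
            (p.support_get_last (by omega)))).symm
    -- the swapped coloring
    set c' : E → ℕ := fun f => if f = e then α
      else if f ∈ p.edges then (if c f = α then β else α) else c f with hc'def
    have hPe : c' e = α := by simp [hc'def]
    have hP1 : ∀ (i : ℕ) (hi : i < p.edges.length),
        c' (p.edges.get ⟨i, hi⟩) = if i % 2 = 0 then β else α := by
      intro i hi
      have hmem : p.edges.get ⟨i, hi⟩ ∈ p.edges := List.get_mem _ _
      have hnotE : p.edges.get ⟨i, hi⟩ ≠ e := fun h => he (h ▸ hpS _ hmem)
      have hci := hcol i hi
      show (if p.edges.get ⟨i, hi⟩ = e then α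
        else if p.edges.get ⟨i, hi⟩ ∈ p.edges then
          (if c (p.edges.get ⟨i, hi⟩) = α then β else α)
        else c (p.edges.get ⟨i, hi⟩)) = if i % 2 = 0 then β else α
      by_cases h2 : i % 2 = 0
      · rw [if_pos h2] at hci
        rw [if_neg hnotE, if_pos hmem, if_pos hci, if_pos h2]
      · rw [if_neg h2] at hci
        rw [if_neg hnotE, if_pos hmem, if_neg (by rw [hci]; exact Ne.symm hαβ), if_neg h2]
    have hP2 : ∀ f ∈ S, f ∉ p.edges → c' f = c f := by
      intro f hfS hfp
      have hfe : f ≠ e := fun h => he (h ▸ hfS)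
      simp [hc'def, hfe, hfp]
    have hvnew : v ≠ w := by
      intro h
      have h0 : (0 : ℕ) < p.support.length := by omega
      have hL : p.edges.length < p.support.length := by omega
      have := hinj 0 p.edges.length h0 hL
        ((p.support_get_zero h0).trans (h.trans (p.support_get_last hL).symm))
      omega
    -- claim A : any S-edge sharing a vertex with e has new color ≠ α
    have claimA : ∀ g ∈ S, (∃ x, x ∈ G.inc e ∧ x ∈ G.inc g) → c' g ≠ α := by
      rintro g hgS ⟨x, hxe, hxg⟩ hgα
      rw [huv, Sym2.mem_iff] at hxe
      by_cases hgp : g ∈ p.edges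
      · rcases hxe with rfl | rfl
        · exact hu_not (mem_support_of_mem_edges p hgp hxg)
        · obtain ⟨⟨i, hi⟩, hgeq⟩ := List.mem_iff_get.mp hgp
          have hxg' : x ∈ G.inc (p.edges.get ⟨i, hi⟩) := by rw [hgeq]; exact hxg
          rw [p.inc_get i hi (by omega) (by omega), Sym2.mem_iff] at hxg'
          have hi0 : i = 0 := by
            have h0 : (0:ℕ) < p.support.length := by omega
            rcases hxg' with h | h
            · have := hinj i 0 (by omega) h0 (h.symm.trans (p.support_get_zero h0).symm)
              omega
            · have := hinj (i+1) 0 (by omega) h0 (h.symm.trans (p.support_get_zero h0).symm)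
              omega
          have := hP1 i hi
          rw [if_pos (by omega), hgeq] at this
          rw [this] at hgα
          exact hαβ hgα.symm
      · rw [hP2 g hgS hgp] at hgα
        rcases hxe with rfl | rfl
        · exact hαu g hgS hxg hgα
        · exact hvnew (alt_aux hc hαβ hβv p hp hpS halt hgS hgp (Or.inl hgα) hxg
            (start_mem_support p)).1
    -- claim B : path edge vs non-path S-edge never get equal new colors
    have claimB : ∀ (i : ℕ) (hi : i < p.edges.length), ∀ g ∈ S, g ∉ p.edges →
        (∃ x, x ∈ G.inc (p.edges.get ⟨i, hi⟩) ∧ x ∈ G.inc g) →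
        c' (p.edges.get ⟨i, hi⟩) ≠ c' g := by
      rintro i hi g hgS hgp ⟨x, hxf, hxg⟩ heq
      rw [hP1 i hi, hP2 g hgS hgp] at heq
      have hcg : c g = α ∨ c g = β := by
        by_cases h2 : i % 2 = 0
        · rw [if_pos h2] at heq; exact Or.inr heq.symm
        · rw [if_neg h2] at heq; exact Or.inl heq.symm
      have hxsup : x ∈ p.support := mem_support_of_mem_edges p (List.get_mem _ _) hxf
      obtain ⟨hxw, hcg2⟩ := alt_aux hc hαβ hβv p hp hpS halt hgS hgp hcg hxg hxsup
      exact hmax g hgS hgp (hxw ▸ hxg) hcg2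
    -- claim C : two distinct path edges never get equal new colors
    have claimC : ∀ (i : ℕ) (hi : i < p.edges.length) (i' : ℕ) (hi' : i' < p.edges.length),
        i ≠ i' → (∃ x, x ∈ G.inc (p.edges.get ⟨i, hi⟩) ∧ x ∈ G.inc (p.edges.get ⟨i', hi'⟩)) →
        c' (p.edges.get ⟨i, hi⟩) ≠ c' (p.edges.get ⟨i', hi'⟩) := by
      rintro i hi i' hi' hii ⟨x, hx1, hx2⟩ heq
      rw [p.inc_get i hi (by omega) (by omega), Sym2.mem_iff] at hx1
      rw [p.inc_get i' hi' (by omega) (by omega), Sym2.mem_iff] at hx2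
      have hconsec : i = i' + 1 ∨ i' = i + 1 := by
        rcases hx1 with h1 | h1 <;> rcases hx2 with h2 | h2 <;>
          [have := hinj i i' (by omega) (by omega) (h1.symm.trans h2);
           have := hinj i (i'+1) (by omega) (by omega) (h1.symm.trans h2);
           have := hinj (i+1) i' (by omega) (by omega) (h1.symm.trans h2);
           have := hinj (i+1) (i'+1) (by omega) (by omega) (h1.symm.trans h2)] <;> omega
      rw [hP1 i hi, hP1 i' hi'] at heq
      by_cases h2 : i % 2 = 0
      · rw [if_pos h2, if_neg (by omega : ¬ i' % 2 = 0)] at heq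
        exact hαβ heq.symm
      · rw [if_neg h2, if_pos (by omega : i' % 2 = 0)] at heq
        exact hαβ heq
    -- the new coloring is proper on `insert e S`
    have hT : G.ColorableOn (insert e S) G.maxDeg := by
      refine ⟨c', ?_, ?_⟩
      · intro f hf
        rcases Set.mem_insert_iff.mp hf with rfl | hfS
        · rw [hPe]; exact hα
        · by_cases hfp : f ∈ p.edges
          · obtain ⟨⟨i, hi⟩, hfeq⟩ := List.mem_iff_get.mp hfp
            rw [← hfeq, hP1 i hi]
            by_cases h2 : i % 2 = 0
            · rw [if_pos h2]; exact hβ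
            · rw [if_neg h2]; exact hα
          · rw [hP2 f hfS hfp]; exact hc.1 f hfS
      · intro f hf g hg hfg hshare
        by_cases hfe : f = e
        · by_cases hge : g = e
          · exact absurd (hfe.trans hge.symm) hfg
          · have hgS : g ∈ S := (Set.mem_insert_iff.mp hg).resolve_left hge
            intro heq
            subst hfe
            rw [hPe] at heq
            exact claimA g hgS hshare heq.symm
        · have hfS : f ∈ S := (Set.mem_insert_iff.mp hf).resolve_left hfe
          by_cases hge : g = e
          · intro heq
            subst hge
            rw [hPe] at heq
            obtain ⟨x, hxf, hxg⟩ := hshare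
            exact claimA f hfS ⟨x, hxg, hxf⟩ heq
          · have hgS : g ∈ S := (Set.mem_insert_iff.mp hg).resolve_left hge
            by_cases hfp : f ∈ p.edges
            · obtain ⟨⟨i, hi⟩, hfeq⟩ := List.mem_iff_get.mp hfp
              by_cases hgp : g ∈ p.edges
              · obtain ⟨⟨i', hi'⟩, hgeq⟩ := List.mem_iff_get.mp hgp
                have hii : i ≠ i' := by
                  intro h
                  apply hfg
                  rw [← hfeq, ← hgeq]
                  exact list_get_congr _ h _ _
                rw [← hfeq, ← hgeq]
                rw [← hfeq, ← hgeq] at hshare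
                exact claimC i hi i' hi' hii hshare
              · rw [← hfeq]
                rw [← hfeq] at hshare
                exact claimB i hi g hgS hgp hshare
            · by_cases hgp : g ∈ p.edges
              · obtain ⟨⟨i', hi'⟩, hgeq⟩ := List.mem_iff_get.mp hgp
                obtain ⟨x, hxf, hxg⟩ := hshare
                intro heq
                rw [← hgeq] at hxg heq
                exact claimB i' hi' f hfS hfp ⟨x, hxg, hxf⟩ heq.symm
              · rw [hP2 f hfS hfp, hP2 g hgS hgp]
                exact hc.2 f hfS g hgS hfg hshare
    have h1 := hS.2 _ hT
    rw [Set.ncard_insert_of_notMem he S.toFinite] at h1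
    omega
  -- evenness
  refine ⟨hw, ?_, hne⟩
  have hL : p.edges.length - 1 < p.edges.length := by omega
  have hmemg : p.edges.get ⟨p.edges.length - 1, hL⟩ ∈ p.edges := List.get_mem _ _
  have hug : u ∈ G.inc (p.edges.get ⟨p.edges.length - 1, hL⟩) := by
    rw [p.inc_get _ hL (by omega) (by omega), Sym2.mem_iff]
    right
    rw [← hw]
    exact ((list_get_congr p.support (by omega : p.edges.length - 1 + 1 = p.edges.length)
      (by omega) (by omega)).trans (p.support_get_last (by omega))).symm
  have hca := hαu _ (hpS _ hmemg) hug
  have := hcol _ hL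
  have hodd : ¬ (p.edges.length - 1) % 2 = 0 := by
    intro h
    rw [if_pos h] at this
    exact hca this
  exact Nat.even_iff.mpr (by omega)

end Multigraph

namespace Multigraph

variable {V E : Type} [Fintype V] [Fintype E]

lemma support_getLast {G : Multigraph V E} :
    ∀ {u v : V} (p : G.Walk u v), p.support.getLast (p.support_ne_nil) = v
  | _, _, .nil _ => rfl
  | _, _, .cons e h p => by
      show (_ :: p.support).getLast (List.cons_ne_nil _ _) = _
      rw [List.getLast_cons (p.support_ne_nil)]
      exact support_getLast p

lemma extend_alt {G : Multigraph V E} {S : Set E} {c : E → ℕ}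
    (hc : G.ProperOn S c G.maxDeg) {α β : ℕ} (hαβ : α ≠ β) {v : V}
    (hβv : G.MissingAt S c β v) {w : V} (p : G.Walk v w)
    (hp : p.IsPath) (hpS : ∀ f ∈ p.edges, f ∈ S) (halt : AltColors c α β p.edges)
    (hnm : ¬ G.MaximalAlt S c α β p) :
    ∃ (w' : V) (q : G.Walk v w'), q.IsPath ∧ (∀ f ∈ q.edges, f ∈ S) ∧
      AltColors c α β q.edges ∧ q.edges.length = p.edges.length + 1 := by
  classical
  unfold MaximalAlt at hnm
  push_neg at hnm
  obtain ⟨f, hfS, hfp, hwf, hcf⟩ := hnm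
  set w' : V := Sym2.Mem.other hwf with hw'def
  have h' : G.inc f = s(w, w') := (Sym2.other_spec hwf).symm
  have hcforα : c f = α ∨ c f = β := by
    by_cases h2 : p.edges.length % 2 = 0
    · rw [if_pos h2] at hcf; exact Or.inl hcf
    · rw [if_neg h2] at hcf; exact Or.inr hcf
  have hw'w : w ≠ w' := by
    have := G.loopless f
    rw [h', Sym2.mk_isDiag_iff] at this
    exact this
  have hw's : w' ∉ p.support := by
    intro hmem
    have := (alt_aux hc hαβ hβv p hp hpS halt hfS hfp hcforα
      (by rw [h']; exact Sym2.mem_mk_right w w') hmem).1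
    exact hw'w this.symm
  have hedges : (p.append (.cons f h' (.nil w'))).edges = p.edges ++ [f] := by
    rw [Walk.edges_append]; rfl
  have hsupp : (p.append (.cons f h' (.nil w'))).support = p.support ++ [w'] := by
    rw [Walk.support_append]
    show p.support.dropLast ++ [w, w'] = p.support ++ [w']
    have hnn := p.support_ne_nil
    have hdl : p.support.dropLast ++ [w] = p.support := by
      have h2 := List.dropLast_append_getLast hnn
      rw [support_getLast p] at h2
      exact h2
    calc p.support.dropLast ++ [w, w']
        = (p.support.dropLast ++ [w]) ++ [w'] := by simp
      _ = p.support ++ [w'] := by rw [hdl]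
  refine ⟨w', p.append (.cons f h' (.nil w')), ?_, ?_, ?_, ?_⟩
  · show (p.append (.cons f h' (.nil w'))).support.Nodup
    rw [hsupp, List.nodup_append]
    exact ⟨hp, List.nodup_singleton _,
      fun a ha b hb hab => hw's (by rw [List.mem_singleton.mp hb] at hab; rwa [hab] at ha)⟩
  · intro g hg
    rw [hedges, List.mem_append] at hg
    rcases hg with hg | hg
    · exact hpS g hg
    · rw [List.mem_singleton.mp hg]; exact hfS
  · rw [hedges]
    rintro ⟨i, hilen⟩
    have hilen' : i < p.edges.length + 1 := by simpa using hilen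
    rcases Nat.lt_or_ge i p.edges.length with hlt | hge
    · have hgeq : (p.edges ++ [f]).get ⟨i, hilen⟩ = p.edges.get ⟨i, hlt⟩ :=
        by rw [List.get_eq_getElem, List.get_eq_getElem]; exact List.getElem_append_left hlt
      rw [hgeq]
      exact halt ⟨i, hlt⟩
    · have hieq : i = p.edges.length := by omega
      have hgeq : (p.edges ++ [f]).get ⟨i, hilen⟩ = f := by
        rw [List.get_eq_getElem]
        exact List.getElem_concat_length hieq _
      rw [hgeq]
      show c f = if i % 2 = 0 then α else β
      rw [hieq]
      exact hcf
  · rw [hedges]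
    simp

lemma exists_maximal_alt {G : Multigraph V E} {S : Set E} {c : E → ℕ}
    (hc : G.ProperOn S c G.maxDeg) {α β : ℕ} (hαβ : α ≠ β) {v : V}
    (hβv : G.MissingAt S c β v) :
    ∀ (n : ℕ) (w : V) (p : G.Walk v w), p.IsPath → (∀ f ∈ p.edges, f ∈ S) →
      AltColors c α β p.edges → Fintype.card E - p.edges.length ≤ n →
      ∃ (w' : V) (q : G.Walk v w'), q.IsPath ∧ (∀ f ∈ q.edges, f ∈ S) ∧
        AltColors c α β q.edges ∧ G.MaximalAlt S c α β q := by
  intro n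
  induction n with
  | zero =>
    intro w p hp hpS halt hcard
    by_cases hm : G.MaximalAlt S c α β p
    · exact ⟨w, p, hp, hpS, halt, hm⟩
    · exfalso
      obtain ⟨w', q, hq, hqS, hqalt, hqlen⟩ := extend_alt hc hαβ hβv p hp hpS halt hm
      have hnd : q.edges.Nodup := nodup_edges_of_isPath q hq
      have := List.Nodup.length_le_card hnd
      omega
  | succ n ih =>
    intro w p hp hpS halt hcard
    by_cases hm : G.MaximalAlt S c α β p
    · exact ⟨w, p, hp, hpS, halt, hm⟩
    · obtain ⟨w', q, hq, hqS, hqalt, hqlen⟩ := extend_alt hc hαβ hβv p hp hpS halt hm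
      have hnd : q.edges.Nodup := nodup_edges_of_isPath q hq
      have hle := List.Nodup.length_le_card hnd
      exact ih w' q hq hqS hqalt (by omega)

end Multigraph


/-- Let `H` (edge set `S`) be a maximum `Δ(G)`-edge-colorable
subgraph of a loopless multigraph `G`, properly colored by `c` with `Δ(G)`
colors, and let `e = (u,v)` be an uncolored edge.  Then for every color `α`
missing at `u` and every color `β` missing at `v`: `α` appears at `v`, `β`
appears at `u`, and the (maximal) `α`-`β`-alternating path starting at `v`
exists and ends at `u`; in particular it has even positive length, so that
together with `e` it forms an odd cycle `C^e_{α,β}`. -/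
theorem maxColorable_alternating_path_ends_at_other_endpoint
    {V E : Type} [Fintype V] [Fintype E] (G : Multigraph V E)
    (S : Set E) (hS : G.IsMaxColorable S)
    (c : E → ℕ) (hc : G.ProperOn S c G.maxDeg)
    (e : E) (he : e ∉ S) (u v : V) (huv : G.inc e = s(u, v))
    (α β : ℕ) (hα : α < G.maxDeg) (hβ : β < G.maxDeg)
    (hαu : G.MissingAt S c α u) (hβv : G.MissingAt S c β v) :
    (∃ f ∈ S, v ∈ G.inc f ∧ c f = α) ∧
    (∃ f ∈ S, u ∈ G.inc f ∧ c f = β) ∧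
    (∃ p : G.Walk v u, p.IsPath ∧ (∀ f ∈ p.edges, f ∈ S) ∧
        Multigraph.AltColors c α β p.edges ∧ G.MaximalAlt S c α β p ∧
        Even p.edges.length ∧ p.edges ≠ []) ∧
    (∀ (w : V) (p : G.Walk v w), p.IsPath → (∀ f ∈ p.edges, f ∈ S) →
        Multigraph.AltColors c α β p.edges → G.MaximalAlt S c α β p →
        w = u ∧ Even p.edges.length ∧ p.edges ≠ []) := by
  classical
  have hαβ : α ≠ β := fun h => Multigraph.no_common_missing hS hc he huv hα hαu (h ▸ hβv)
  have part1 : ∃ f ∈ S, v ∈ G.inc f ∧ c f = α := by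
    by_contra h
    push_neg at h
    exact Multigraph.no_common_missing hS hc he huv hα hαu (fun f hf hvf => h f hf hvf)
  have part2 : ∃ f ∈ S, u ∈ G.inc f ∧ c f = β := by
    by_contra h
    push_neg at h
    exact Multigraph.no_common_missing hS hc he huv hβ (fun f hf hvf => h f hf hvf) hβv
  have part4 : ∀ (w : V) (p : G.Walk v w), p.IsPath → (∀ f ∈ p.edges, f ∈ S) →
      Multigraph.AltColors c α β p.edges → G.MaximalAlt S c α β p →
      w = u ∧ Even p.edges.length ∧ p.edges ≠ [] :=
    fun _ p hp hpS halt hmax =>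
      Multigraph.maximal_ends hS hc he huv hα hβ hαu hβv p hp hpS halt hmax
  refine ⟨part1, part2, ?_, part4⟩
  obtain ⟨w', q, hq, hqS, hqalt, hqmax⟩ :=
    Multigraph.exists_maximal_alt hc hαβ hβv (Fintype.card E) v (.nil v)
      (by simpa [Multigraph.Walk.IsPath] using List.nodup_singleton v)
      (by simp) (fun i => absurd i.isLt (by simp)) (by simp)
  obtain ⟨hw, heven, hnon⟩ := part4 w' q hq hqS hqalt hqmax
  subst hw
  exact ⟨q, hq, hqS, hqalt, hqmax, heven, hnon⟩
end

section
/- Let G be a finite loopless multigraph, H a maximum Δ(G)-edge-colorable subgraph of G (properly colored with Δ(G) colors), and let e and e' be two uncolored edges. If the cycles C^e_{α,β} and C^{e'}_{α,γ} (sharing the color α) have a common edge, then there is a vertex v such that both e and e' are incident to v and the color α is missing at v. -/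
namespace Multigraph

variable {V E : Type}

/-! ### Auxiliary infrastructure -/

lemma list_mem_iff_getD {A : Type} (l : List A) (d a : A) :
    a ∈ l ↔ ∃ i, i < l.length ∧ l.getD i d = a := by
  rw [List.mem_iff_getElem]
  constructor
  · rintro ⟨i, h, rfl⟩; exact ⟨i, h, List.getD_eq_getElem l d h⟩
  · rintro ⟨i, h, rfl⟩; exact ⟨i, h, (List.getD_eq_getElem l d h).symm⟩

variable {V E : Type}

namespace Walk

lemma support_length {G : Multigraph V E} : ∀ {a b : V} (p : G.Walk a b),
    p.support.length = p.edges.length + 1 := by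
  intro a b p
  induction p with
  | nil v => rfl
  | cons e h q ih => simp only [Walk.support, Walk.edges, List.length_cons, ih]

lemma support_getD_zero {G : Multigraph V E} {a b : V} (p : G.Walk a b) (x : V) :
    p.support.getD 0 x = a := by
  cases p with
  | nil v => rfl
  | cons e h q => rfl

lemma support_getD_last {G : Multigraph V E} : ∀ {a b : V} (p : G.Walk a b) (x : V),
    p.support.getD p.edges.length x = b := by
  intro a b p
  induction p with
  | nil v => intro x; rfl
  | cons e h q ih =>
      intro x
      show (_ :: q.support).getD (q.edges.length + 1) x = _
      rw [List.getD_cons_succ]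
      exact ih x

lemma inc_getD {G : Multigraph V E} : ∀ {a b : V} (p : G.Walk a b) (d : E) (x : V)
    (i : ℕ), i < p.edges.length →
    G.inc (p.edges.getD i d) = s(p.support.getD i x, p.support.getD (i+1) x) := by
  intro a b p
  induction p with
  | nil v => intro d x i hi; exact absurd hi (by simp [Walk.edges])
  | cons f hf q ih =>
      intro d x i hi
      cases i with
      | zero =>
          show G.inc ((f :: q.edges).getD 0 d) =
            s((_ :: q.support).getD 0 x, (_ :: q.support).getD 1 x)
          rw [List.getD_cons_zero, List.getD_cons_zero, List.getD_cons_succ,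
            support_getD_zero q x]
          exact hf
      | succ i =>
          show G.inc ((f :: q.edges).getD (i+1) d) =
            s((_ :: q.support).getD (i+1) x, (_ :: q.support).getD (i+2) x)
          rw [List.getD_cons_succ, List.getD_cons_succ, List.getD_cons_succ]
          have hi' : i + 1 < q.edges.length + 1 := hi
          exact ih d x i (by omega)

end Walk

/-- Indexed data of an alternating path. -/
structure AltData (G : Multigraph V E) (S : Set E) (c : E → ℕ) (α β : ℕ) : Type where
  n : ℕ
  X : ℕ → V
  F : ℕ → E
  hpos : 0 < n
  hinc : ∀ i, i < n → G.inc (F i) = s(X i, X (i+1))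
  hmem : ∀ i, i < n → F i ∈ S
  hcol : ∀ i, i < n → c (F i) = if Even i then α else β
  hXinj : ∀ i, i ≤ n → ∀ j, j ≤ n → X i = X j → i = j
  hmα : G.MissingAt S c α (X n)
  hmβ : G.MissingAt S c β (X 0)

namespace AltData

variable {G : Multigraph V E} {S : Set E} {c : E → ℕ} {α β N : ℕ}

lemma X_mem_inc (D : AltData G S c α β) {i j : ℕ} (hi : i < D.n) (hj : j = i ∨ j = i + 1) :
    D.X j ∈ G.inc (D.F i) := by
  rw [D.hinc i hi, Sym2.mem_iff]
  rcases hj with rfl | rfl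
  · exact Or.inl rfl
  · exact Or.inr rfl

lemma F_inj (D : AltData G S c α β) {i j : ℕ} (hi : i < D.n) (hj : j < D.n)
    (h : D.F i = D.F j) : i = j := by
  have h2 : s(D.X i, D.X (i+1)) = s(D.X j, D.X (j+1)) := by
    rw [← D.hinc i hi, ← D.hinc j hj, h]
  rw [Sym2.eq_iff] at h2
  rcases h2 with ⟨h3, _⟩ | ⟨h3, h4⟩
  · exact D.hXinj i (by omega) j (by omega) h3
  · have := D.hXinj i (by omega) (j+1) (by omega) h3
    have := D.hXinj (i+1) (by omega) j (by omega) h4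
    omega

lemma even_n (D : AltData G S c α β) : Even D.n := by
  by_contra hodd
  have h0 := D.hpos
  have h1 : D.n - 1 < D.n := by omega
  have h2 : Even (D.n - 1) := by
    rcases Nat.even_or_odd D.n with h | h
    · exact absurd h hodd
    · rcases h with ⟨k, hk⟩; exact ⟨k, by omega⟩
  have h3 : c (D.F (D.n - 1)) = α := by rw [D.hcol _ h1, if_pos h2]
  have h4 : D.X D.n ∈ G.inc (D.F (D.n - 1)) := D.X_mem_inc h1 (Or.inr (by omega))
  exact D.hmα _ (D.hmem _ h1) h4 h3

lemma two_le (D : AltData G S c α β) : 2 ≤ D.n := by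
  have h1 := D.hpos
  rcases D.even_n with ⟨k, hk⟩
  omega

lemma ne_colors (D : AltData G S c α β) (hc : G.ProperOn S c N) : α ≠ β := by
  have h2 := D.two_le
  have h01 : D.F 0 ≠ D.F 1 := fun h => by have := D.F_inj (by omega) (by omega) h; omega
  have hadj : ∃ w : V, w ∈ G.inc (D.F 0) ∧ w ∈ G.inc (D.F 1) :=
    ⟨D.X 1, D.X_mem_inc (by omega) (Or.inr rfl), D.X_mem_inc (by omega) (Or.inl rfl)⟩
  have := hc.2 _ (D.hmem 0 (by omega)) _ (D.hmem 1 (by omega)) h01 hadj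
  rw [D.hcol 0 (by omega), D.hcol 1 (by omega)] at this
  simpa using this

lemma has_alpha (D : AltData G S c α β) {j : ℕ} (hj : j < D.n) :
    ∃ h, h ∈ S ∧ D.X j ∈ G.inc h ∧ c h = α := by
  by_cases hev : Even j
  · exact ⟨D.F j, D.hmem j hj, D.X_mem_inc hj (Or.inl rfl),
      by rw [D.hcol j hj, if_pos hev]⟩
  · have hj1 : j - 1 < D.n := by omega
    have hj0 : 1 ≤ j := by
      rcases Nat.eq_zero_or_pos j with rfl | h'
      · exact absurd Even.zero hev
      · exact h'
    have hev1 : Even (j - 1) := by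
      rcases Nat.even_or_odd j with h | h
      · exact absurd h hev
      · rcases h with ⟨k, hk⟩; exact ⟨k, by omega⟩
    refine ⟨D.F (j-1), D.hmem _ hj1, D.X_mem_inc hj1 (Or.inr (by omega)),
      by rw [D.hcol _ hj1, if_pos hev1]⟩

lemma unique_alpha (D : AltData G S c α β) (hc : G.ProperOn S c N) {j : ℕ} (hj : j ≤ D.n)
    {h : E} (hh : h ∈ S) (hinc : D.X j ∈ G.inc h) (hcolh : c h = α) :
    ∃ i, i < D.n ∧ Even i ∧ h = D.F i ∧ (j = i ∨ j = i + 1) := by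
  rcases Nat.lt_or_ge j D.n with hjn | hjn
  · by_cases hev : Even j
    · refine ⟨j, hjn, hev, ?_, Or.inl rfl⟩
      by_contra hne
      exact hc.2 _ hh _ (D.hmem j hjn) hne
        ⟨D.X j, hinc, D.X_mem_inc hjn (Or.inl rfl)⟩
        (by rw [hcolh, D.hcol j hjn, if_pos hev])
    · have hj1 : j - 1 < D.n := by omega
      have hev1 : Even (j - 1) := by
        rcases Nat.even_or_odd j with h' | h'
        · exact absurd h' hev
        · rcases h' with ⟨k, hk⟩; exact ⟨k, by omega⟩
      have hj0 : 1 ≤ j := by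
        rcases Nat.eq_zero_or_pos j with rfl | h'
        · exact absurd (Even.zero) hev
        · exact h'
      refine ⟨j - 1, hj1, hev1, ?_, Or.inr (by omega)⟩
      by_contra hne
      exact hc.2 _ hh _ (D.hmem _ hj1) hne
        ⟨D.X j, hinc, D.X_mem_inc hj1 (Or.inr (by omega))⟩
        (by rw [hcolh, D.hcol _ hj1, if_pos hev1])
  · have hjn' : j = D.n := by omega
    subst hjn'
    exact absurd hcolh (D.hmα _ hh hinc)

lemma unique_beta (D : AltData G S c α β) (hc : G.ProperOn S c N) {j : ℕ} (hj : j ≤ D.n)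
    {h : E} (hh : h ∈ S) (hinc : D.X j ∈ G.inc h) (hcolh : c h = β) :
    ∃ i, i < D.n ∧ ¬ Even i ∧ h = D.F i ∧ (j = i ∨ j = i + 1) := by
  rcases Nat.eq_zero_or_pos j with rfl | hj0
  · exact absurd hcolh (D.hmβ _ hh hinc)
  · rcases D.even_n with ⟨m, hm⟩
    by_cases hev : Even j
    · have hj1 : j - 1 < D.n := by omega
      have hodd1 : ¬ Even (j - 1) := by
        rcases hev with ⟨k, hk⟩
        intro ⟨k', hk'⟩; omega
      refine ⟨j - 1, hj1, hodd1, ?_, Or.inr (by omega)⟩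
      by_contra hne
      exact hc.2 _ hh _ (D.hmem _ hj1) hne
        ⟨D.X j, hinc, D.X_mem_inc hj1 (Or.inr (by omega))⟩
        (by rw [hcolh, D.hcol _ hj1, if_neg hodd1])
    · have hjn : j < D.n := by
        rcases Nat.lt_or_ge j D.n with h' | h'
        · exact h'
        · have : j = D.n := by omega
          subst this
          exact absurd ⟨m, hm⟩ hev
      refine ⟨j, hjn, hev, ?_, Or.inl rfl⟩
      by_contra hne
      exact hc.2 _ hh _ (D.hmem _ hjn) hne
        ⟨D.X j, hinc, D.X_mem_inc hjn (Or.inl rfl)⟩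
        (by rw [hcolh, D.hcol _ hjn, if_neg hev])

end AltData

lemma exists_altData (G : Multigraph V E) (S : Set E) (c : E → ℕ) (α β : ℕ) (e : E) (u v : V)
    (p : G.Walk v u) (hincE : G.inc e = s(u, v))
    (hmαu : G.MissingAt S c α u) (hmβv : G.MissingAt S c β v)
    (hpath : p.IsPath) (hedges : ∀ f ∈ p.edges, f ∈ S) (halt : AltColors c α β p.edges) :
    ∃ D : AltData G S c α β, D.X 0 = v ∧ D.X D.n = u ∧
      (∀ g, g ∈ p.edges ↔ ∃ i, i < D.n ∧ D.F i = g) := by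
  have hne : v ≠ u := by
    intro h
    subst h
    exact G.loopless e (by rw [hincE]; exact Sym2.mk_isDiag_iff.mpr rfl)
  have hpos : 0 < p.edges.length := by
    cases p with
    | nil w => exact absurd rfl hne
    | cons f hf q => simp [Walk.edges]
  have hsl := p.support_length
  refine ⟨⟨p.edges.length, fun i => p.support.getD i u, fun i => p.edges.getD i e, hpos,
    fun i hi => p.inc_getD e u i hi,
    fun i hi => hedges _ ((list_mem_iff_getD p.edges e _).mpr ⟨i, hi, rfl⟩),
    ?_, ?_, ?_, ?_⟩, p.support_getD_zero u, p.support_getD_last u, fun g => ?_⟩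
  · intro i hi
    show c (p.edges.getD i e) = if Even i then α else β
    have h2 : c p.edges[i] = if i % 2 = 0 then α else β := halt ⟨i, hi⟩
    rw [List.getD_eq_getElem _ _ hi, h2]
    by_cases hev : Even i
    · rw [if_pos hev, if_pos (Nat.even_iff.mp hev)]
    · rw [if_neg hev, if_neg (fun h => hev (Nat.even_iff.mpr h))]
  · intro i hi j hj hij
    have hij' : p.support.getD i u = p.support.getD j u := hij
    have hi' : i < p.support.length := by omega
    have hj' : j < p.support.length := by omega
    rw [List.getD_eq_getElem _ _ hi', List.getD_eq_getElem _ _ hj'] at hij'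
    exact (List.Nodup.getElem_inj_iff hpath).mp hij'
  · show G.MissingAt S c α (p.support.getD p.edges.length u)
    rw [p.support_getD_last u]; exact hmαu
  · show G.MissingAt S c β (p.support.getD 0 u)
    rw [p.support_getD_zero u]; exact hmβv
  · exact list_mem_iff_getD p.edges e g

end Multigraph


/-- Lemma 1 of the paper. Let `H` (edge set `S`) be a maximum
`Δ(G)`-edge-colorable subgraph of a loopless multigraph `G`, properly colored
by `c` with `Δ(G)` colors, and let `e`, `e'` be two uncolored edges.  If the
cycles `C^e_{α,β}` and `C^{e'}_{α,γ}` (sharing the color `α`) have a common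
edge, then there is a vertex `w` incident with both `e` and `e'` at which the
color `α` is missing. -/
theorem kempeCycles_common_edge_common_vertex
    {V E : Type} [Fintype V] [Fintype E] (G : Multigraph V E)
    (S : Set E) (hS : G.IsMaxColorable S)
    (c : E → ℕ) (hc : G.ProperOn S c G.maxDeg)
    (e e' : E) (he : e ∉ S) (he' : e' ∉ S)
    (α β γ : ℕ) (C C' : Set E)
    (hC : G.IsKempeCycle S c e α β C) (hC' : G.IsKempeCycle S c e' α γ C')
    (hint : (C ∩ C').Nonempty) :
    ∃ w : V, w ∈ G.inc e ∧ w ∈ G.inc e' ∧ G.MissingAt S c α w := by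
  classical
  obtain ⟨g₀, hg₀C, hg₀C'⟩ := hint
  obtain ⟨hαΔ, hβΔ, u, v, p, hincE, hmαu, hmβv, hpath, hedgeS, halt, hCeq⟩ := hC
  obtain ⟨-, hγΔ, u', v', p', hincE', hmαu', hmγv', hpath', hedgeS', halt', hCeq'⟩ := hC'
  by_cases hee : e = e'
  · exact ⟨u, by rw [hincE]; exact Sym2.mem_iff.mpr (Or.inl rfl),
      by rw [← hee, hincE]; exact Sym2.mem_iff.mpr (Or.inl rfl), hmαu⟩
  by_cases huu : u = u'
  · exact ⟨u, by rw [hincE]; exact Sym2.mem_iff.mpr (Or.inl rfl),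
      by rw [hincE']; exact Sym2.mem_iff.mpr (Or.inl huu), hmαu⟩
  exfalso
  have hg₀p : g₀ ∈ p.edges := by
    rw [hCeq] at hg₀C
    rcases hg₀C with rfl | h
    · rw [hCeq'] at hg₀C'
      rcases hg₀C' with h' | h'
      · exact absurd h' hee
      · exact absurd (hedgeS' _ h') he
    · exact h
  have hg₀p' : g₀ ∈ p'.edges := by
    rw [hCeq'] at hg₀C'
    rcases hg₀C' with rfl | h
    · exact absurd (hedgeS _ hg₀p) he'
    · exact h
  obtain ⟨D, hX0, hXn, hFmem⟩ :=
    Multigraph.exists_altData G S c α β e u v p hincE hmαu hmβv hpath hedgeS halt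
  obtain ⟨D', hY0, hYn, hF'mem⟩ :=
    Multigraph.exists_altData G S c α γ e' u' v' p' hincE' hmαu' hmγv' hpath' hedgeS' halt'
  have hαβ : α ≠ β := D.ne_colors hc
  have hαγ : α ≠ γ := D'.ne_colors hc
  have hu'X : ∀ j, j ≤ D.n → D.X j ≠ u' := by
    intro j hj heq
    rcases Nat.lt_or_ge j D.n with hlt | hge
    · obtain ⟨h, hhS, hhinc, hhcol⟩ := D.has_alpha hlt
      rw [heq] at hhinc
      exact hmαu' _ hhS hhinc hhcol
    · have hje : j = D.n := by omega
      subst hje; rw [hXn] at heq; exact huu heq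
  have huY : ∀ j, j ≤ D'.n → D'.X j ≠ u := by
    intro j hj heq
    rcases Nat.lt_or_ge j D'.n with hlt | hge
    · obtain ⟨h, hhS, hhinc, hhcol⟩ := D'.has_alpha hlt
      rw [heq] at hhinc
      exact hmαu _ hhS hhinc hhcol
    · have hje : j = D'.n := by omega
      subst hje; rw [hYn] at heq; exact huu heq.symm
  obtain ⟨i₁, hi₁, hFi₁⟩ := (hFmem g₀).mp hg₀p
  obtain ⟨j₁, hj₁, hF'j₁⟩ := (hF'mem g₀).mp hg₀p'
  by_cases hbg : β = γ
  · -- Case A : both cycles use the same two colours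
    subst hbg
    set W : Set V := {w | ∃ j, j ≤ D.n ∧ D.X j = w} with hWdef
    have hclosed : ∀ h ∈ S, (c h = α ∨ c h = β) → ∀ w ∈ G.inc h, w ∈ W →
        ∀ z ∈ G.inc h, z ∈ W := by
      intro h hhS hcolh w hwinc hwW z hzinc
      obtain ⟨j, hj, rfl⟩ := hwW
      rcases hcolh with hcα | hcβ
      · obtain ⟨i, hi, -, rfl, -⟩ := D.unique_alpha hc hj hhS hwinc hcα
        rw [D.hinc i hi, Sym2.mem_iff] at hzinc
        rcases hzinc with rfl | rfl
        · exact ⟨i, by omega, rfl⟩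
        · exact ⟨i+1, by omega, rfl⟩
      · obtain ⟨i, hi, -, rfl, -⟩ := D.unique_beta hc hj hhS hwinc hcβ
        rw [D.hinc i hi, Sym2.mem_iff] at hzinc
        rcases hzinc with rfl | rfl
        · exact ⟨i, by omega, rfl⟩
        · exact ⟨i+1, by omega, rfl⟩
    have hbase : D'.X j₁ ∈ W := by
      have h1 : D'.X j₁ ∈ G.inc g₀ := by
        rw [← hF'j₁]; exact D'.X_mem_inc hj₁ (Or.inl rfl)
      have h2 : G.inc g₀ = s(D.X i₁, D.X (i₁+1)) := by
        rw [← hFi₁]; exact D.hinc i₁ hi₁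
      rw [h2, Sym2.mem_iff] at h1
      rcases h1 with h1 | h1
      · exact ⟨i₁, by omega, h1.symm⟩
      · exact ⟨i₁+1, by omega, h1.symm⟩
    have hstep : ∀ l, l < D'.n → (D'.X l ∈ W → D'.X (l+1) ∈ W) ∧
        (D'.X (l+1) ∈ W → D'.X l ∈ W) := by
      intro l hl
      have hcl : c (D'.F l) = α ∨ c (D'.F l) = β := by
        rw [D'.hcol l hl]
        by_cases hev : Even l
        · left; rw [if_pos hev]
        · right; rw [if_neg hev]
      constructor
      · intro hW
        exact hclosed _ (D'.hmem l hl) hcl _ (D'.X_mem_inc hl (Or.inl rfl)) hW _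
          (D'.X_mem_inc hl (Or.inr rfl))
      · intro hW
        exact hclosed _ (D'.hmem l hl) hcl _ (D'.X_mem_inc hl (Or.inr rfl)) hW _
          (D'.X_mem_inc hl (Or.inl rfl))
    have hup : ∀ d, j₁ + d ≤ D'.n → D'.X (j₁ + d) ∈ W := by
      intro d
      induction d with
      | zero => intro _; exact hbase
      | succ d ih =>
          intro hd
          have h1 := (hstep (j₁+d) (by omega)).1 (ih (by omega))
          have h2 : j₁ + (d+1) = (j₁ + d) + 1 := by omega
          rwa [h2]
    have hu'W : D'.X D'.n ∈ W := by
      have h1 := hup (D'.n - j₁) (by omega)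
      rwa [show j₁ + (D'.n - j₁) = D'.n by omega] at h1
    rw [hYn] at hu'W
    obtain ⟨j, hj, hjeq⟩ := hu'W
    exact hu'X j hj hjeq
  · -- Case B : β ≠ γ
    have hβγ : β ≠ γ := hbg
    have hPex : ∃ i, i < D.n ∧ ∃ j, j < D'.n ∧ D'.F j = D.F i :=
      ⟨i₁, hi₁, j₁, hj₁, by rw [hF'j₁, hFi₁]⟩
    set K := Nat.find hPex with hKdef
    obtain ⟨hKn, J, hJn, hJF⟩ : K < D.n ∧ ∃ j, j < D'.n ∧ D'.F j = D.F K :=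
      Nat.find_spec hPex
    have hKmin : ∀ i, i < K → ¬ (i < D.n ∧ ∃ j, j < D'.n ∧ D'.F j = D.F i) :=
      fun i hi => Nat.find_min hPex hi
    have hcf : c (D.F K) = if Even K then α else β := D.hcol K hKn
    have hcf' : c (D.F K) = if Even J then α else γ := by rw [← hJF]; exact D'.hcol J hJn
    have hKev : Even K := by
      by_contra h1
      rw [if_neg h1] at hcf
      by_cases h2 : Even J
      · rw [if_pos h2] at hcf'; exact hαβ (by rw [← hcf', hcf])
      · rw [if_neg h2] at hcf'; exact hβγ (by rw [← hcf, ← hcf'])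
    rw [if_pos hKev] at hcf
    have hJev : Even J := by
      by_contra h2
      rw [if_neg h2] at hcf'
      exact hαγ (by rw [← hcf, ← hcf'])
    rw [if_pos hJev] at hcf'
    have hdir : (D.X K = D'.X J ∧ D.X (K+1) = D'.X (J+1)) ∨
        (D.X K = D'.X (J+1) ∧ D.X (K+1) = D'.X J) := by
      have h1 : s(D.X K, D.X (K+1)) = s(D'.X J, D'.X (J+1)) := by
        rw [← D.hinc K hKn, ← D'.hinc J hJn, hJF]
      exact Sym2.eq_iff.mp h1
    -- the recoloured subgraph S' with colouring c₁
    set swapb : ℕ → ℕ := fun x => if x = α then β else if x = β then α else x with hswapb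
    set c₁ : E → ℕ := fun h =>
      if h = e then α else if ∃ i, i < K ∧ D.F i = h then swapb (c h) else c h with hc₁def
    set S' : Set E := insert e (S \ {D.F K}) with hS'def
    have hfS : D.F K ∈ S := D.hmem K hKn
    have hef : e ≠ D.F K := fun h => he (h ▸ hfS)
    have hFneE : ∀ i, i < D.n → D.F i ≠ e := fun i hi h => he (h ▸ D.hmem i hi)
    have hc₁app : ∀ h, c₁ h =
        if h = e then α else if ∃ i, i < K ∧ D.F i = h then swapb (c h) else c h :=
      fun h => rfl
    have hswapbapp : ∀ x, swapb x = if x = α then β else if x = β then α else x :=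
      fun x => rfl
    have hc₁e : c₁ e = α := by rw [hc₁app, if_pos rfl]
    have hc₁pre : ∀ i, i < K → c₁ (D.F i) = if Even i then β else α := by
      intro i hi
      rw [hc₁app, if_neg (hFneE i (by omega)), if_pos ⟨i, hi, rfl⟩, D.hcol i (by omega),
        hswapbapp]
      by_cases hev : Even i
      · rw [if_pos hev, if_pos hev, if_pos rfl]
      · rw [if_neg hev, if_neg hev, if_neg (Ne.symm hαβ), if_pos rfl]
    have hc₁out : ∀ h, h ≠ e → ¬ (∃ i, i < K ∧ D.F i = h) → c₁ h = c h := by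
      intro h h1 h2
      rw [hc₁app, if_neg h1, if_neg h2]
    -- classification of the edges of S'
    have hclassify : ∀ h, h ∈ S' → h = e ∨ (∃ i, i < K ∧ D.F i = h) ∨
        (h ∈ S ∧ h ≠ D.F K ∧ h ≠ e ∧ ¬ (∃ i, i < K ∧ D.F i = h)) := by
      intro h hh
      rcases hh with rfl | ⟨h1, h2⟩
      · exact Or.inl rfl
      · by_cases h3 : ∃ i, i < K ∧ D.F i = h
        · exact Or.inr (Or.inl h3)
        · exact Or.inr (Or.inr ⟨h1, by simpa using h2, fun h4 => he (h4 ▸ h1), h3⟩)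
    have hpreS' : ∀ i, i < K → D.F i ∈ S' := by
      intro i hi
      refine Set.mem_insert_of_mem _ ⟨D.hmem i (by omega), ?_⟩
      simp only [Set.mem_singleton_iff]
      intro h1
      have := D.F_inj (by omega : i < D.n) hKn h1
      omega
    have heS' : e ∈ S' := Set.mem_insert _ _
    -- membership of edge endpoints of p in the X-range
    have hwX : ∀ (w : V) i, i < D.n → w ∈ G.inc (D.F i) → ∃ j, j ≤ D.n ∧ (j = i ∨ j = i+1) ∧ D.X j = w := by
      intro w i hi hw
      rw [D.hinc i hi, Sym2.mem_iff] at hw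
      rcases hw with rfl | rfl
      · exact ⟨i, by omega, Or.inl rfl, rfl⟩
      · exact ⟨i+1, by omega, Or.inr rfl, rfl⟩
    -- no conflicts for c₁ on S'
    have hEP : ∀ i, i < K → (∃ w, w ∈ G.inc e ∧ w ∈ G.inc (D.F i)) → c₁ e ≠ c₁ (D.F i) := by
      intro i hi ⟨w, hw1, hw2⟩
      rw [hc₁e, hc₁pre i hi]
      by_cases hev : Even i
      · rw [if_pos hev]; exact hαβ
      · exfalso
        obtain ⟨j, hj, hji, hjw⟩ := hwX w i (by omega) hw2
        rw [hincE, Sym2.mem_iff] at hw1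
        rcases hw1 with rfl | rfl
        · -- w = u = X D.n
          have := D.hXinj j hj D.n le_rfl (by rw [hjw, hXn])
          omega
        · -- w = v = X 0
          have := D.hXinj j hj 0 (by omega) (by rw [hjw, hX0])
          have hi0 : i = 0 ∨ i + 1 = 0 := by omega
          rcases hi0 with rfl | h'
          · exact hev Even.zero
          · omega
    have hEO : ∀ h, h ∈ S → h ≠ D.F K → h ≠ e → ¬ (∃ i, i < K ∧ D.F i = h) →
        (∃ w, w ∈ G.inc e ∧ w ∈ G.inc h) → c₁ e ≠ c₁ h := by
      intro h h1 h2 h3 h4 ⟨w, hw1, hw2⟩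
      rw [hc₁e, hc₁out h h3 h4]
      intro hcon
      rw [hincE, Sym2.mem_iff] at hw1
      rcases hw1 with rfl | rfl
      · exact hmαu _ h1 hw2 hcon.symm
      · -- h is an α-edge at v = X 0
        rw [← hX0] at hw2
        obtain ⟨i, hi, hiev, rfl, hjrel⟩ := D.unique_alpha hc (by omega) h1 hw2 hcon.symm
        have hi0 : i = 0 := by omega
        subst hi0
        rcases Nat.eq_zero_or_pos K with hK0 | hK0
        · exact h2 (by rw [hK0])
        · exact h4 ⟨0, hK0, rfl⟩
    have hPP : ∀ i, i < K → ∀ i', i' < K → D.F i ≠ D.F i' →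
        (∃ w, w ∈ G.inc (D.F i) ∧ w ∈ G.inc (D.F i')) → c₁ (D.F i) ≠ c₁ (D.F i') := by
      intro i hi i' hi' hne hadj
      have h1 := hc.2 _ (D.hmem i (by omega)) _ (D.hmem i' (by omega)) hne hadj
      rw [D.hcol i (by omega), D.hcol i' (by omega)] at h1
      rw [hc₁pre i hi, hc₁pre i' hi']
      by_cases hev : Even i <;> by_cases hev' : Even i'
      · rw [if_pos hev, if_pos hev'] at h1; exact absurd rfl h1
      · rw [if_pos hev, if_neg hev'] at h1 ⊢; exact Ne.symm hαβ
      · rw [if_neg hev, if_pos hev'] at h1 ⊢; exact hαβ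
      · rw [if_neg hev, if_neg hev'] at h1; exact absurd rfl h1
    have hOO : ∀ g h, g ∈ S → h ∈ S → g ≠ h → c₁ g = c g → c₁ h = c h →
        (∃ w, w ∈ G.inc g ∧ w ∈ G.inc h) → c₁ g ≠ c₁ h := by
      intro g h h1 h2 h3 h4 h5 h6
      rw [h4, h5]
      exact hc.2 _ h1 _ h2 h3 h6
    have hPO : ∀ i, i < K → ∀ h, h ∈ S → h ≠ D.F K → h ≠ e → ¬ (∃ i', i' < K ∧ D.F i' = h) →
        (∃ w, w ∈ G.inc (D.F i) ∧ w ∈ G.inc h) → c₁ (D.F i) ≠ c₁ h := by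
      intro i hi h h1 h2 h3 h4 ⟨w, hw1, hw2⟩ hcon
      obtain ⟨j, hj, hji, hjw⟩ := hwX w i (by omega) hw1
      rw [hc₁pre i hi, hc₁out h h3 h4] at hcon
      subst hjw
      by_cases hev : Even i
      · rw [if_pos hev] at hcon
        obtain ⟨i₂, hi₂, hi₂odd, rfl, hrel⟩ := D.unique_beta hc hj h1 hw2 hcon.symm
        rw [Nat.even_iff] at hev hKev
        rw [Nat.even_iff] at hi₂odd
        have : i₂ < K ∨ i₂ = K := by omega
        rcases this with h' | h'
        · have hx : (∃ i', i' < K ∧ D.F i' = D.F i₂) := ⟨i₂, h', rfl⟩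
          exact h4 hx
        · exact h2 (by rw [h'])
      · rw [if_neg hev] at hcon
        obtain ⟨i₂, hi₂, hi₂ev, rfl, hrel⟩ := D.unique_alpha hc hj h1 hw2 hcon.symm
        rw [Nat.even_iff] at hev
        rw [Nat.even_iff] at hi₂ev hKev
        have : i₂ < K ∨ i₂ = K := by omega
        rcases this with h' | h'
        · have hx : (∃ i', i' < K ∧ D.F i' = D.F i₂) := ⟨i₂, h', rfl⟩
          exact h4 hx
        · exact h2 (by rw [h'])
    have hadjsymm : ∀ (g h : E), (∃ w, w ∈ G.inc g ∧ w ∈ G.inc h) →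
        (∃ w, w ∈ G.inc h ∧ w ∈ G.inc g) := by
      rintro g h ⟨w, h1, h2⟩; exact ⟨w, h2, h1⟩
    have hP1 : G.ProperOn S' c₁ G.maxDeg := by
      constructor
      · intro h hh
        rcases hclassify h hh with rfl | ⟨i, hi, rfl⟩ | ⟨h1, -, h3, h4⟩
        · rw [hc₁e]; exact hαΔ
        · rw [hc₁pre i hi]
          by_cases hev : Even i
          · rw [if_pos hev]; exact hβΔ
          · rw [if_neg hev]; exact hαΔ
        · rw [hc₁out h h3 h4]; exact hc.1 h h1
      · intro g hg h hh hne hadj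
        rcases hclassify g hg with rfl | ⟨i, hi, rfl⟩ | ⟨hg1, hg2, hg3, hg4⟩ <;>
          rcases hclassify h hh with rfl | ⟨i', hi', rfl⟩ | ⟨hh1, hh2, hh3, hh4⟩
        · exact absurd rfl hne
        · exact hEP i' hi' hadj
        · exact hEO h hh1 hh2 hh3 hh4 hadj
        · exact (hEP i hi (hadjsymm _ _ hadj)).symm
        · exact hPP i hi i' hi' hne hadj
        · exact hPO i hi h hh1 hh2 hh3 hh4 hadj
        · exact (hEO _ hg1 hg2 hg3 hg4 (hadjsymm _ _ hadj)).symm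
        · exact (hPO i' hi' _ hg1 hg2 hg3 hg4 (hadjsymm _ _ hadj)).symm
        · exact hOO g h hg1 hh1 hne (hc₁out g hg3 hg4) (hc₁out h hh3 hh4) hadj
    -- colours missing at u' and v' for the new colouring
    have hmα'u' : ∀ h, h ∈ S' → u' ∈ G.inc h → c₁ h ≠ α := by
      intro h hh hinc'
      rcases hclassify h hh with rfl | ⟨i, hi, rfl⟩ | ⟨h1, h2, h3, h4⟩
      · exfalso
        rw [hincE, Sym2.mem_iff] at hinc'
        rcases hinc' with h5 | h5
        · exact huu h5.symm
        · exact hu'X 0 (by omega) (by rw [hX0, ← h5])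
      · exfalso
        obtain ⟨j, hj, hji, hjw⟩ := hwX u' i (by omega) hinc'
        exact hu'X j hj hjw
      · rw [hc₁out h h3 h4]
        exact hmαu' h h1 hinc'
    have hmγ'v' : ∀ h, h ∈ S' → v' ∈ G.inc h → c₁ h ≠ γ := by
      intro h hh hinc'
      rcases hclassify h hh with rfl | ⟨i, hi, rfl⟩ | ⟨h1, h2, h3, h4⟩
      · rw [hc₁e]; exact hαγ
      · rw [hc₁pre i hi]
        by_cases hev : Even i
        · rw [if_pos hev]; exact hβγ
        · rw [if_neg hev]; exact hαγ
      · rw [hc₁out h h3 h4]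
        exact hmγv' h h1 hinc'
    -- minimality restated
    have hshared : ∀ i, i < D.n → (∃ l, l < D'.n ∧ D'.F l = D.F i) → K ≤ i := by
      intro i hi hl
      by_contra hlt
      exact hKmin i (by omega) ⟨hi, hl⟩
    -- catalogue of γ-coloured edges of (S', c₁) at a vertex of p'
    have hcatγ : ∀ j, j ≤ D'.n → ∀ h, h ∈ S' → D'.X j ∈ G.inc h → c₁ h = γ →
        ∃ l, l < D'.n ∧ ¬ Even l ∧ h = D'.F l ∧ (j = l ∨ j = l + 1) := by
      intro j hj h hh hinc' hcolh
      rcases hclassify h hh with rfl | ⟨i, hi, rfl⟩ | ⟨h1, h2, h3, h4⟩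
      · rw [hc₁e] at hcolh; exact absurd hcolh hαγ
      · rw [hc₁pre i hi] at hcolh
        by_cases hev : Even i
        · rw [if_pos hev] at hcolh; exact absurd hcolh hβγ
        · rw [if_neg hev] at hcolh; exact absurd hcolh hαγ
      · rw [hc₁out h h3 h4] at hcolh
        exact D'.unique_beta hc hj h1 hinc' hcolh
    -- catalogue of α-coloured edges of (S', c₁) at a vertex of p'
    have hcatα : ∀ j, j ≤ D'.n → ∀ h, h ∈ S' → D'.X j ∈ G.inc h → c₁ h = α →
        D'.X j = D.X K ∨
        (∃ l, l < D'.n ∧ Even l ∧ h = D'.F l ∧ l ≠ J ∧ (j = l ∨ j = l + 1)) := by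
      intro j hj h hh hinc' hcolh
      rcases hclassify h hh with rfl | ⟨i, hi, rfl⟩ | ⟨h1, h2, h3, h4⟩
      · -- h = e
        rw [hincE, Sym2.mem_iff] at hinc'
        rcases hinc' with h5 | h5
        · exact absurd h5 (huY j hj)
        · rcases Nat.eq_zero_or_pos K with hK0 | hK0
          · left; rw [h5, ← hX0, hK0]
          · exfalso
            have hF0col : c (D.F 0) = α := by
              rw [D.hcol 0 (by omega), if_pos Even.zero]
            have hj' : j < D'.n := by
              rcases Nat.lt_or_ge j D'.n with h6 | h6
              · exact h6
              · exfalso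
                have h7 : j = D'.n := by omega
                have h8 : u' = D.X 0 := by rw [← hYn, ← h7, h5, ← hX0]
                refine hmαu' (D.F 0) (D.hmem 0 (by omega)) ?_ hF0col
                rw [h8]
                exact D.X_mem_inc (by omega) (Or.inl rfl)
            have h6 : D'.X j ∈ G.inc (D.F 0) := by
              rw [h5, ← hX0]; exact D.X_mem_inc (by omega) (Or.inl rfl)
            obtain ⟨l, hl, hlev, hleq, hlrel⟩ :=
              D'.unique_alpha hc hj (D.hmem 0 (by omega)) h6 hF0col
            have := hshared 0 (by omega) ⟨l, hl, hleq.symm⟩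
            omega
      · -- h = D.F i with i < K
        rw [hc₁pre i hi] at hcolh
        have hodd : ¬ Even i := by
          intro hev; rw [if_pos hev] at hcolh; exact hαβ hcolh.symm
        obtain ⟨jx, hjx, hjxi, hjxw⟩ := hwX (D'.X j) i (by omega) hinc'
        have hj' : j < D'.n := by
          rcases Nat.lt_or_ge j D'.n with h6 | h6
          · exact h6
          · exfalso
            have h7 : j = D'.n := by omega
            exact hu'X jx hjx (by rw [hjxw, h7, hYn])
        rcases hjxi with h9 | h9
        · exfalso
          have hjxw' : D.X i = D'.X j := by rw [← h9]; exact hjxw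
          have hipos : 1 ≤ i := by
            rcases Nat.eq_zero_or_pos i with rfl | h6
            · exact absurd Even.zero hodd
            · exact h6
          have hi1 : i - 1 < D.n := by omega
          have hev1 : Even (i-1) := by
            rcases Nat.even_or_odd i with h' | h'
            · exact absurd h' hodd
            · exact Nat.Odd.sub_odd h' odd_one
          have h6 : D'.X j ∈ G.inc (D.F (i-1)) := by
            rw [← hjxw']; exact D.X_mem_inc hi1 (Or.inr (by omega))
          obtain ⟨l, hl, hlev, hleq, hlrel⟩ := D'.unique_alpha hc hj (D.hmem _ hi1) h6
            (by rw [D.hcol _ hi1, if_pos hev1])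
          have := hshared (i-1) hi1 ⟨l, hl, hleq.symm⟩
          omega
        · have hjxw' : D.X (i+1) = D'.X j := by rw [← h9]; exact hjxw
          have hev1 : Even (i+1) := by
            rcases Nat.even_or_odd i with h' | h'
            · exact absurd h' hodd
            · exact Odd.add_one h'
          have hlt : i + 1 < D.n := by omega
          have h6 : D'.X j ∈ G.inc (D.F (i+1)) := by
            rw [← hjxw']; exact D.X_mem_inc hlt (Or.inl rfl)
          obtain ⟨l, hl, hlev, hleq, hlrel⟩ := D'.unique_alpha hc hj (D.hmem _ hlt) h6
            (by rw [D.hcol _ hlt, if_pos hev1])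
          have h7 := hshared (i+1) hlt ⟨l, hl, hleq.symm⟩
          have h8 : i + 1 = K := by omega
          left
          rw [← hjxw', h8]
      · -- a plain edge of S
        rw [hc₁out h h3 h4] at hcolh
        obtain ⟨l, hl, hlev, hleq, hlrel⟩ := D'.unique_alpha hc hj h1 hinc' hcolh
        right
        refine ⟨l, hl, hlev, hleq, ?_, hlrel⟩
        intro hlJ
        subst hlJ
        exact h2 (by rw [hleq, hJF])
    -- the reachability relation for colours α, γ of (S', c₁)
    set R : V → V → Prop :=
      fun w z => ∃ h, h ∈ S' ∧ (c₁ h = α ∨ c₁ h = γ) ∧ G.inc h = s(w, z) with hRdef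
    have hRapp : ∀ w z, R w z ↔ ∃ h, h ∈ S' ∧ (c₁ h = α ∨ c₁ h = γ) ∧ G.inc h = s(w, z) :=
      fun w z => Iff.rfl
    have hRsymm : Symmetric R := by
      intro w z hz
      obtain ⟨h, h1, h2, h3⟩ := (hRapp w z).mp hz
      exact (hRapp z w).mpr ⟨h, h1, h2, by rw [h3, Sym2.eq_swap]⟩
    set Xr : Set V := {z | Relation.ReflTransGen R v' z} with hXrdef
    have hv'Xr : v' ∈ Xr := Relation.ReflTransGen.refl
    have hRreach : ∀ w z, w ∈ Xr → R w z → z ∈ Xr := by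
      intro w z hw hR
      exact Relation.ReflTransGen.tail hw hR
    -- u' is not reachable from v'
    have hu'Xr : u' ∉ Xr := by
      rcases hdir with ⟨hd1, hd2⟩ | ⟨hd1, hd2⟩
      · -- same direction : D.X K = D'.X J
        intro hmem
        have hsym : Relation.ReflTransGen R u' v' :=
          (@Relation.ReflTransGen.stdSymm _ R ⟨fun a b h => hRsymm h⟩).symm _ _ hmem
        have hstep : ∀ w z, R w z → (∃ j, J+1 ≤ j ∧ j ≤ D'.n ∧ D'.X j = w) →
            (∃ j, J+1 ≤ j ∧ j ≤ D'.n ∧ D'.X j = z) := by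
          rintro w z hR ⟨j, hj1, hj2, hjw⟩
          obtain ⟨h, hh, hcolh, hinch⟩ := (hRapp w z).mp hR
          subst hjw
          have hwin : D'.X j ∈ G.inc h := by rw [hinch, Sym2.mem_iff]; left; rfl
          rcases hcolh with hca | hcg
          · rcases hcatα j hj2 h hh hwin hca with hXK | ⟨l, hl, hlev, hleq, hlJ, hlrel⟩
            · exfalso
              have := D'.hXinj j hj2 J (by omega) (by rw [hXK, hd1])
              omega
            · subst hleq
              have h7 : s(D'.X j, z) = s(D'.X l, D'.X (l+1)) := by
                rw [← hinch, D'.hinc l hl]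
              rw [Sym2.eq_iff] at h7
              rcases h7 with ⟨h8, rfl⟩ | ⟨h8, rfl⟩
              · have hjl : j = l := D'.hXinj j hj2 l (by omega) h8
                exact ⟨l+1, by omega, by omega, rfl⟩
              · have hjl : j = l + 1 := D'.hXinj j hj2 (l+1) (by omega) h8
                exact ⟨l, by omega, by omega, rfl⟩
          · obtain ⟨l, hl, hlodd, hleq, hlrel⟩ := hcatγ j hj2 h hh hwin hcg
            subst hleq
            have hlJ : l ≠ J := by intro h8; subst h8; exact hlodd hJev
            have h7 : s(D'.X j, z) = s(D'.X l, D'.X (l+1)) := by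
              rw [← hinch, D'.hinc l hl]
            rw [Sym2.eq_iff] at h7
            rcases h7 with ⟨h8, rfl⟩ | ⟨h8, rfl⟩
            · have hjl : j = l := D'.hXinj j hj2 l (by omega) h8
              exact ⟨l+1, by omega, by omega, rfl⟩
            · have hjl : j = l + 1 := D'.hXinj j hj2 (l+1) (by omega) h8
              exact ⟨l, by omega, by omega, rfl⟩
        have hprop : ∀ (a b : V), Relation.ReflTransGen R a b →
            (∃ j, J+1 ≤ j ∧ j ≤ D'.n ∧ D'.X j = a) →
            (∃ j, J+1 ≤ j ∧ j ≤ D'.n ∧ D'.X j = b) := by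
          intro a b hab
          induction hab with
          | refl => exact id
          | tail h1 h2 ih => intro ha; exact hstep _ _ h2 (ih ha)
        obtain ⟨j, hj1, hj2, hjv'⟩ := hprop u' v' hsym ⟨D'.n, by omega, le_rfl, hYn⟩
        have := D'.hXinj j hj2 0 (by omega) (by rw [hjv', hY0])
        omega
      · -- opposite direction : D.X K = D'.X (J+1)
        intro hmem
        have hstep : ∀ w z, R w z → (∃ j, j ≤ J ∧ D'.X j = w) →
            (∃ j, j ≤ J ∧ D'.X j = z) := by
          rintro w z hR ⟨j, hj1, hjw⟩
          have hj2 : j ≤ D'.n := by omega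
          obtain ⟨h, hh, hcolh, hinch⟩ := (hRapp w z).mp hR
          subst hjw
          have hwin : D'.X j ∈ G.inc h := by rw [hinch, Sym2.mem_iff]; left; rfl
          rcases hcolh with hca | hcg
          · rcases hcatα j hj2 h hh hwin hca with hXK | ⟨l, hl, hlev, hleq, hlJ, hlrel⟩
            · exfalso
              have := D'.hXinj j hj2 (J+1) (by omega) (by rw [hXK, hd1])
              omega
            · subst hleq
              have h7 : s(D'.X j, z) = s(D'.X l, D'.X (l+1)) := by
                rw [← hinch, D'.hinc l hl]
              rw [Sym2.eq_iff] at h7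
              rcases h7 with ⟨h8, rfl⟩ | ⟨h8, rfl⟩
              · have hjl : j = l := D'.hXinj j hj2 l (by omega) h8
                exact ⟨l+1, by omega, rfl⟩
              · have hjl : j = l + 1 := D'.hXinj j hj2 (l+1) (by omega) h8
                exact ⟨l, by omega, rfl⟩
          · obtain ⟨l, hl, hlodd, hleq, hlrel⟩ := hcatγ j hj2 h hh hwin hcg
            subst hleq
            have hlJ : l ≠ J := by intro h8; subst h8; exact hlodd hJev
            have h7 : s(D'.X j, z) = s(D'.X l, D'.X (l+1)) := by
              rw [← hinch, D'.hinc l hl]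
            rw [Sym2.eq_iff] at h7
            rcases h7 with ⟨h8, rfl⟩ | ⟨h8, rfl⟩
            · have hjl : j = l := D'.hXinj j hj2 l (by omega) h8
              exact ⟨l+1, by omega, rfl⟩
            · have hjl : j = l + 1 := D'.hXinj j hj2 (l+1) (by omega) h8
              exact ⟨l, by omega, rfl⟩
        have hprop : ∀ (a b : V), Relation.ReflTransGen R a b →
            (∃ j, j ≤ J ∧ D'.X j = a) → (∃ j, j ≤ J ∧ D'.X j = b) := by
          intro a b hab
          induction hab with
          | refl => exact id
          | tail h1 h2 ih => intro ha; exact hstep _ _ h2 (ih ha)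
        obtain ⟨j, hj1, hju'⟩ := hprop v' u' hmem ⟨0, by omega, hY0⟩
        have := D'.hXinj j (by omega) D'.n le_rfl (by rw [hju', hYn])
        omega
    -- the final recolouring : swap α and γ on the component of v', colour e' with α
    set swapc : ℕ → ℕ := fun x => if x = α then γ else if x = γ then α else x with hswapc
    have hswapcapp : ∀ x, swapc x = if x = α then γ else if x = γ then α else x :=
      fun x => rfl
    set SwapP : E → Prop := fun h =>
      h ∈ S' ∧ (c₁ h = α ∨ c₁ h = γ) ∧ ∃ w, w ∈ G.inc h ∧ w ∈ Xr with hSwapPdef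
    have hSwapPapp : ∀ h, SwapP h ↔
        (h ∈ S' ∧ (c₁ h = α ∨ c₁ h = γ) ∧ ∃ w, w ∈ G.inc h ∧ w ∈ Xr) := fun h => Iff.rfl
    have hSwapAll : ∀ h, SwapP h → ∀ w, w ∈ G.inc h → w ∈ Xr := by
      intro h hh w hw
      obtain ⟨h1, h2, w₀, hw₀, hw₀X⟩ := (hSwapPapp h).mp hh
      obtain ⟨z, hz⟩ := Sym2.mem_iff_exists.mp hw₀
      have hzX : z ∈ Xr := hRreach w₀ z hw₀X ((hRapp w₀ z).mpr ⟨h, h1, h2, hz⟩)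
      rw [hz, Sym2.mem_iff] at hw
      rcases hw with rfl | rfl
      · exact hw₀X
      · exact hzX
    set c₂ : E → ℕ := fun h => if h = e' then α else if SwapP h then swapc (c₁ h) else c₁ h
      with hc₂def
    have hc₂app : ∀ h, c₂ h = if h = e' then α else if SwapP h then swapc (c₁ h) else c₁ h :=
      fun h => rfl
    have he'S' : e' ∉ S' := by
      intro hmem
      rcases Set.mem_insert_iff.mp hmem with h1 | h1
      · exact hee h1.symm
      · exact he' h1.1
    have hswapcα : swapc α = γ := by rw [hswapcapp, if_pos rfl]
    have hswapcγ : swapc γ = α := by rw [hswapcapp, if_neg (Ne.symm hαγ), if_pos rfl]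
    have hswapc_inj : ∀ x y, swapc x = swapc y → x = y := by
      intro x y hxy
      rw [hswapcapp, hswapcapp] at hxy
      by_cases h1 : x = α
      · rw [if_pos h1] at hxy
        by_cases h2 : y = α
        · rw [h1, h2]
        · rw [if_neg h2] at hxy
          by_cases h4 : y = γ
          · rw [if_pos h4] at hxy; exact absurd hxy.symm hαγ
          · rw [if_neg h4] at hxy; exact absurd hxy.symm h4
      · rw [if_neg h1] at hxy
        by_cases h3 : x = γ
        · rw [if_pos h3] at hxy
          by_cases h2 : y = α
          · rw [if_pos h2] at hxy; exact absurd hxy hαγ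
          · rw [if_neg h2] at hxy
            by_cases h4 : y = γ
            · rw [h3, h4]
            · rw [if_neg h4] at hxy; exact absurd hxy.symm h2
        · rw [if_neg h3] at hxy
          by_cases h2 : y = α
          · rw [if_pos h2] at hxy; exact absurd hxy h3
          · rw [if_neg h2] at hxy
            by_cases h4 : y = γ
            · rw [if_pos h4] at hxy; exact absurd hxy h1
            · rw [if_neg h4] at hxy; exact hxy
    have hT : G.ProperOn (insert e' S') c₂ G.maxDeg := by
      constructor
      · intro h hh
        rcases Set.mem_insert_iff.mp hh with rfl | hh
        · rw [hc₂app, if_pos rfl]; exact hαΔ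
        · rw [hc₂app, if_neg (fun h'' : h = e' => he'S' (h'' ▸ hh))]
          by_cases h1 : SwapP h
          · rw [if_pos h1]
            obtain ⟨-, h2, -⟩ := (hSwapPapp h).mp h1
            rcases h2 with h2 | h2 <;> rw [h2]
            · rw [hswapcα]; exact hγΔ
            · rw [hswapcγ]; exact hαΔ
          · rw [if_neg h1]; exact hP1.1 h hh
      · intro g hg h hh hne hadj
        have hc₂e' : c₂ e' = α := by rw [hc₂app, if_pos rfl]
        have hkey : ∀ h, h ∈ S' → (∃ w, w ∈ G.inc e' ∧ w ∈ G.inc h) → c₂ h ≠ α := by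
          rintro h hh ⟨w, hw1, hw2⟩
          rw [hc₂app, if_neg (fun h'' : h = e' => he'S' (h'' ▸ hh))]
          rw [hincE', Sym2.mem_iff] at hw1
          by_cases h1 : SwapP h
          · rw [if_pos h1]
            intro hcon
            have h2 : c₁ h = γ := by
              obtain ⟨-, h3, -⟩ := (hSwapPapp h).mp h1
              rcases h3 with h3 | h3
              · rw [h3, hswapcα] at hcon; exact absurd hcon.symm hαγ
              · exact h3
            rcases hw1 with rfl | rfl
            · exact hu'Xr (hSwapAll h h1 _ hw2)
            · exact hmγ'v' h hh hw2 h2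
          · rw [if_neg h1]
            intro hcon
            rcases hw1 with rfl | rfl
            · exact hmα'u' h hh hw2 hcon
            · exact h1 ((hSwapPapp h).mpr ⟨hh, Or.inl hcon, _, hw2, hv'Xr⟩)
        rcases Set.mem_insert_iff.mp hg with hge' | hgS <;>
          rcases Set.mem_insert_iff.mp hh with hhe' | hhS
        · exact absurd (hge'.trans hhe'.symm) hne
        · rw [hge'] at hadj ⊢
          rw [hc₂e']
          exact (hkey h hhS hadj).symm
        · rw [hhe'] at hadj ⊢
          rw [hc₂e']
          exact hkey g hgS (hadjsymm _ _ hadj)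
        · have hg' : g ≠ e' := fun h'' => he'S' (h'' ▸ hgS)
          have hh' : h ≠ e' := fun h'' => he'S' (h'' ▸ hhS)
          rw [hc₂app g, if_neg hg', hc₂app h, if_neg hh']
          have hbase := hP1.2 g hgS h hhS hne hadj
          by_cases h1 : SwapP g <;> by_cases h2 : SwapP h
          · rw [if_pos h1, if_pos h2]
            exact fun hcon => hbase (hswapc_inj _ _ hcon)
          · rw [if_pos h1, if_neg h2]
            intro hcon
            obtain ⟨w, hw1, hw2⟩ := hadj
            have hwX' : w ∈ Xr := hSwapAll g h1 w hw1
            have hcg : c₁ g = α ∨ c₁ g = γ := ((hSwapPapp g).mp h1).2.1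
            have hch : c₁ h = α ∨ c₁ h = γ := by
              rcases hcg with h3 | h3
              · right; rw [← hcon, h3, hswapcα]
              · left; rw [← hcon, h3, hswapcγ]
            exact h2 ((hSwapPapp h).mpr ⟨hhS, hch, w, hw2, hwX'⟩)
          · rw [if_neg h1, if_pos h2]
            intro hcon
            obtain ⟨w, hw1, hw2⟩ := hadj
            have hwX' : w ∈ Xr := hSwapAll h h2 w hw2
            have hch : c₁ h = α ∨ c₁ h = γ := ((hSwapPapp h).mp h2).2.1
            have hcg : c₁ g = α ∨ c₁ g = γ := by
              rcases hch with h3 | h3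
              · right; rw [hcon, h3, hswapcα]
              · left; rw [hcon, h3, hswapcγ]
            exact h1 ((hSwapPapp g).mpr ⟨hgS, hcg, w, hw1, hwX'⟩)
          · rw [if_neg h1, if_neg h2]; exact hbase
    have hcard : (insert e' S').ncard = S.ncard + 1 := by
      have h1 : (S \ {D.F K}).ncard = S.ncard - 1 := Set.ncard_diff_singleton_of_mem hfS
      have h2 : e ∉ S \ {D.F K} := fun h => he h.1
      have h3 : S'.ncard = (S \ {D.F K}).ncard + 1 := by
        rw [hS'def]; exact Set.ncard_insert_of_notMem h2 (Set.toFinite _)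
      have h4 : (insert e' S').ncard = S'.ncard + 1 :=
        Set.ncard_insert_of_notMem he'S' (Set.toFinite _)
      have h5 : 0 < S.ncard := (Set.ncard_pos (Set.toFinite S)).mpr ⟨D.F K, hfS⟩
      omega
    have hle := hS.2 (insert e' S') ⟨c₂, hT⟩
    omega
end
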